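/- Let H = ⟨a, b, c | a^{2^n} = 1, b^{2^m} = a^{2^m}, c^{2^ℓ} = 1, [b,a] = c, [c,a] = c^{-2}, [c,b] = c^{-2}⟩ with n ≥ m > ℓ ≥ 2, and let F be a field of characteristic 2. Set y = b + a + 1 ∈ FH. Then y^{2^m} = 1. -/

import Mathlib

open FreeGroup in
/-- Relators of H = ⟨a,b,c | a^{2^n}=1, b^{2^m}=a^{2^m}, c^{2^ℓ}=1, [b,a]=c, [c,a]=c⁻²,
[c,b]=c⁻²⟩ (convention [b,a] = b⁻¹a⁻¹ba; generators 0 ↦ a, 1 ↦ b, 2 ↦ c). -/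
def relsH2 (n m ℓ : ℕ) : Set (FreeGroup (Fin 3)) :=
  { (of 0) ^ (2 ^ n), (of 1) ^ (2 ^ m) * ((of 0) ^ (2 ^ m))⁻¹, (of 2) ^ (2 ^ ℓ),
    (of 1)⁻¹ * (of 0)⁻¹ * of 1 * of 0 * (of 2)⁻¹,
    (of 2)⁻¹ * (of 0)⁻¹ * of 2 * of 0 * (of 2) ^ 2,
    (of 2)⁻¹ * (of 1)⁻¹ * of 2 * of 1 * (of 2) ^ 2 }

abbrev H2 (n m ℓ : ℕ) := PresentedGroup (relsH2 n m ℓ)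

/-!
In characteristic 2 the cross terms of `y ^ 2` collapse via `b * a = a * b * c` to
`y ^ 2 = a ^ 2 + b ^ 2 + 1 + a * b * (1 + c)`. Conjugation by `a` or `b` inverts `c`, so `a ^ 2`,
`b ^ 2` and `a * b` commute with `c`, and `a ^ 2`, `b ^ 2` commute with each other and with
`a * b`. Hence the Frobenius `t ↦ t ^ 2 ^ (m - 1)` is additive on these summands, giving
`y ^ 2 ^ m = a ^ 2 ^ m + b ^ 2 ^ m + 1 + (a * b) ^ 2 ^ (m - 1) * (1 + c ^ 2 ^ (m - 1))`, where
`a ^ 2 ^ m = b ^ 2 ^ m` and `c ^ 2 ^ (m - 1) = 1` because `ℓ < m`.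
-/

section Group

variable {G : Type*} [Group G] {a b c : G}

lemma mul_eq_mul_mul_of_inv_mul_inv_mul_mul_mul_eq_one {w : G}
    (h : a⁻¹ * b⁻¹ * a * b * w = 1) : a * b = b * a * w⁻¹ :=
  calc a * b = b * a * (a⁻¹ * b⁻¹ * a * b * w) * w⁻¹ := by group
    _ = b * a * w⁻¹ := by rw [h, mul_one]

lemma inv_mul_eq_mul_of_mul_eq_mul_inv (h : c * a = a * c⁻¹) : c⁻¹ * a = a * c :=
  calc c⁻¹ * a = c⁻¹ * (a * c⁻¹) * c := by group
    _ = a * c := by rw [← h]; group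

lemma commute_sq_of_mul_eq_mul_inv (h : c * a = a * c⁻¹) : Commute (a ^ 2) c :=
  calc a ^ 2 * c = a * (a * c) := by rw [sq, mul_assoc]
    _ = c * a ^ 2 := by
      rw [← inv_mul_eq_mul_of_mul_eq_mul_inv h, ← mul_assoc, ← h, mul_assoc, sq]

lemma commute_mul_of_mul_eq_mul_inv (ha : c * a = a * c⁻¹) (hb : c * b = b * c⁻¹) :
    Commute (a * b) c :=
  calc a * b * c = a * (c⁻¹ * b) := by rw [inv_mul_eq_mul_of_mul_eq_mul_inv hb, mul_assoc]
    _ = c * (a * b) := by rw [← mul_assoc, ← ha, mul_assoc]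

lemma commute_sq_left_of_mul_eq_mul_mul (hba : b * a = a * b * c) (hca : c * a = a * c⁻¹) :
    Commute (a ^ 2) b :=
  calc a ^ 2 * b = a * (b * a) * c⁻¹ := by rw [hba, sq]; group
    _ = b * a ^ 2 := by
      rw [mul_assoc, mul_assoc, ← hca, ← mul_assoc, ← mul_assoc, ← hba, sq, mul_assoc]

lemma commute_sq_right_of_mul_eq_mul_mul (hba : b * a = a * b * c) (hcb : c * b = b * c⁻¹) :
    Commute (b ^ 2) a :=
  calc b ^ 2 * a = b * (a * b * c) := by rw [← hba, sq, mul_assoc]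
    _ = a * b ^ 2 := by
      rw [← mul_assoc, ← mul_assoc, hba, mul_assoc (a * b), hcb, sq]; group

end Group

section CharTwo

variable {R : Type*} [Ring R] [CharP R 2] {x y z : R}

lemma add_add_one_sq_of_mul_eq_mul_mul (h : y * x = x * y * z) :
    (y + x + 1) ^ 2 = x ^ 2 + y ^ 2 + 1 + x * y * (1 + z) := by
  have expand : (y + x + 1) ^ 2 = x ^ 2 + y ^ 2 + 1 + (y * x + x * y) + 2 * (x + y) := by
    noncomm_ring
  rw [expand, CharTwo.two_eq_zero (R := R), zero_mul, add_zero, h, mul_add, mul_one,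
    add_comm (x * y * z)]

lemma add_add_one_pow_two_pow_succ_eq_one {k : ℕ} (hyx : y * x = x * y * z)
    (hx2y : Commute (x ^ 2) y) (hy2x : Commute (y ^ 2) x) (hx2z : Commute (x ^ 2) z)
    (hy2z : Commute (y ^ 2) z) (hxyz : Commute (x * y) z)
    (hxy : x ^ 2 ^ (k + 1) = y ^ 2 ^ (k + 1)) (hz : z ^ 2 ^ k = 1) :
    (y + x + 1) ^ 2 ^ (k + 1) = 1 := by
  have hx2w : Commute (x ^ 2) (x * y * (1 + z)) :=
    ((Commute.pow_self x 2).mul_right hx2y).mul_right ((Commute.one_right _).add_right hx2z)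
  have hy2w : Commute (y ^ 2) (x * y * (1 + z)) :=
    (hy2x.mul_right (Commute.pow_self y 2)).mul_right ((Commute.one_right _).add_right hy2z)
  have hxy1z : Commute (x * y) (1 + z) := (Commute.one_right _).add_right hxyz
  have h1z : (1 + z) ^ 2 ^ k = 0 := by
    rw [add_pow_char_pow_of_commute 2 k (Commute.one_left z), one_pow, hz,
      CharTwo.add_self_eq_zero]
  calc (y + x + 1) ^ 2 ^ (k + 1) = (x ^ 2 + y ^ 2 + 1 + x * y * (1 + z)) ^ 2 ^ k := by
        rw [pow_succ', pow_mul, add_add_one_sq_of_mul_eq_mul_mul hyx]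
    _ = (x ^ 2) ^ 2 ^ k + (y ^ 2) ^ 2 ^ k + 1 + (x * y) ^ 2 ^ k * (1 + z) ^ 2 ^ k := by
        rw [add_pow_char_pow_of_commute 2 k ((hx2w.add_left hy2w).add_left (Commute.one_left _)),
          add_pow_char_pow_of_commute 2 k (Commute.one_right _),
          add_pow_char_pow_of_commute 2 k (hx2y.pow_right 2), one_pow, hxy1z.mul_pow]
    _ = 1 := by
        rw [← pow_mul, ← pow_mul, ← pow_succ', hxy, CharTwo.add_self_eq_zero, h1z, mul_zero,
          add_zero, zero_add]

end CharTwo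

theorem MonoidAlgebra.of_add_of_add_one_pow_two_pow_eq_one {F G : Type*} [CommRing F]
    [CharP F 2] [Group G] {a b c : G} {ℓ m : ℕ} (hba : b * a = a * b * c)
    (hca : c * a = a * c⁻¹) (hcb : c * b = b * c⁻¹) (hb : b ^ 2 ^ m = a ^ 2 ^ m)
    (hc : c ^ 2 ^ ℓ = 1) (hℓm : ℓ < m) :
    (of F G b + of F G a + 1) ^ 2 ^ m = 1 := by
  have : CharP (MonoidAlgebra F G) 2 := charP_of_injective_algebraMap' F 2
  obtain ⟨k, rfl⟩ : ∃ k, m = k + 1 := ⟨m - 1, by omega⟩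
  obtain ⟨d, hd⟩ := pow_dvd_pow 2 (Nat.le_of_lt_succ hℓm)
  have hck : c ^ 2 ^ k = 1 := by rw [hd, pow_mul, hc, one_pow]
  apply add_add_one_pow_two_pow_succ_eq_one (z := of F G c) (k := k)
  all_goals simp only [← map_pow, ← map_mul, ← map_one (of F G)]
  · rw [hba]
  · exact (commute_sq_left_of_mul_eq_mul_mul hba hca).map _
  · exact (commute_sq_right_of_mul_eq_mul_mul hba hcb).map _
  · exact (commute_sq_of_mul_eq_mul_inv hca).map _
  · exact (commute_sq_of_mul_eq_mul_inv hcb).map _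
  · exact (commute_mul_of_mul_eq_mul_inv hca hcb).map _
  · rw [hb]
  · rw [hck]

lemma PresentedGroup.mk_of {α : Type*} (rels : Set (FreeGroup α)) (x : α) :
    PresentedGroup.mk rels (FreeGroup.of x) = PresentedGroup.of x :=
  rfl

namespace H2

variable {n m ℓ : ℕ}

local notation "a" => (PresentedGroup.of (rels := relsH2 n m ℓ) 0)
local notation "b" => (PresentedGroup.of (rels := relsH2 n m ℓ) 1)
local notation "c" => (PresentedGroup.of (rels := relsH2 n m ℓ) 2)

lemma b_pow : b ^ 2 ^ m = a ^ 2 ^ m := by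
  have h := PresentedGroup.mk_eq_mk_of_mul_inv_mem (rels := relsH2 n m ℓ)
    (x := FreeGroup.of 1 ^ 2 ^ m) (y := FreeGroup.of 0 ^ 2 ^ m) (by simp [relsH2])
  simpa only [map_pow, PresentedGroup.mk_of] using h

lemma c_pow : c ^ 2 ^ ℓ = 1 := by
  have h := PresentedGroup.one_of_mem (rels := relsH2 n m ℓ)
    (x := FreeGroup.of 2 ^ 2 ^ ℓ) (by simp [relsH2])
  simpa only [map_pow, PresentedGroup.mk_of] using h

lemma b_mul_a : b * a = a * b * c := by
  have h := PresentedGroup.one_of_mem (rels := relsH2 n m ℓ)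
    (x := (FreeGroup.of 1)⁻¹ * (FreeGroup.of 0)⁻¹ * .of 1 * .of 0 * (FreeGroup.of 2)⁻¹)
    (by simp [relsH2])
  simp only [map_mul, map_inv, PresentedGroup.mk_of] at h
  simpa only [inv_inv] using mul_eq_mul_mul_of_inv_mul_inv_mul_mul_mul_eq_one h

lemma c_mul_a : c * a = a * c⁻¹ := by
  have h := PresentedGroup.one_of_mem (rels := relsH2 n m ℓ)
    (x := (FreeGroup.of 2)⁻¹ * (FreeGroup.of 0)⁻¹ * .of 2 * .of 0 * FreeGroup.of 2 ^ 2)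
    (by simp [relsH2])
  simp only [map_mul, map_inv, map_pow, PresentedGroup.mk_of] at h
  rw [mul_eq_mul_mul_of_inv_mul_inv_mul_mul_mul_eq_one h]
  group

lemma c_mul_b : c * b = b * c⁻¹ := by
  have h := PresentedGroup.one_of_mem (rels := relsH2 n m ℓ)
    (x := (FreeGroup.of 2)⁻¹ * (FreeGroup.of 1)⁻¹ * .of 2 * .of 1 * FreeGroup.of 2 ^ 2)
    (by simp [relsH2])
  simp only [map_mul, map_inv, map_pow, PresentedGroup.mk_of] at h
  rw [mul_eq_mul_mul_of_inv_mul_inv_mul_mul_mul_eq_one h]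
  group

end H2

theorem stmt9_general (n m ℓ : ℕ) (hmℓ : ℓ < m)
    (F : Type*) [Field F] [CharP F 2] :
    (MonoidAlgebra.of F (H2 n m ℓ) (PresentedGroup.of 1) +
      MonoidAlgebra.of F (H2 n m ℓ) (PresentedGroup.of 0) + 1) ^ (2 ^ m) = 1 :=
  MonoidAlgebra.of_add_of_add_one_pow_two_pow_eq_one H2.b_mul_a H2.c_mul_a H2.c_mul_b H2.b_pow
    H2.c_pow hmℓ

/-- For n ≥ m > ℓ ≥ 2 and F of characteristic 2, the unit
y = b + a + 1 of FH satisfies y^{2^m} = 1. -/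
theorem stmt9 (n m ℓ : ℕ) (hℓ : 2 ≤ ℓ) (hmℓ : ℓ < m) (hnm : m ≤ n)
    (F : Type*) [Field F] [CharP F 2] :
    (MonoidAlgebra.of F (H2 n m ℓ) (PresentedGroup.of 1) +
      MonoidAlgebra.of F (H2 n m ℓ) (PresentedGroup.of 0) + 1) ^ (2 ^ m) = 1 :=
  stmt9_general n m ℓ hmℓ F
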